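/- arXiv:2312.00346 — 2 statements merged into one kernel-verified Lean document; each statement's English description precedes it below -/
import Mathlib

section
/- (Contractive projection property of group hard-thresholding.) Let X, X* ∈ ℝ^{N×N×T₀} be tensors with frontal slices (X_j) and (X*_j). Let S₁ = {j : X_j ≠ 0} and S₂ = {j : X*_j ≠ 0} with cardinalities s₁ and s₂. Let HT(X, s) denote the tensor keeping the s frontal slices of X with largest Frobenius norms and setting the others to zero. If s₂ < s ≤ s₁ and S₂ ⊆ S₁, then ‖HT(X,s) − X‖_F² ≤ ((s₁ − s)/(s₁ − s₂)) · ‖X − X*‖_F². -/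
/-!
Let `f j = ‖X_j‖_F²`. The slices dropped by hard thresholding are the nonzero slices of `X`
outside the kept set `S`, and each of them is no larger than any kept slice. The error
`‖X − X*‖_F²` is at least the sum of `f` over `S₁ \ S₂`, a set of `s₁ − s₂ ≥ s₁ − s` slices
contained in `S₁`, i.e. made of dropped and kept slices. Since dropped slices are the smallest,
their average is at most the average over `S₁ \ S₂`, which is the claimed bound.
-/
noncomputable def frob {m n : Type*} [Fintype m] [Fintype n] (M : Matrix m n ℝ) : ℝ :=
  Real.sqrt (∑ i, ∑ j, (M i j) ^ 2)

theorem frob_nonneg {m n : Type*} [Fintype m] [Fintype n] (M : Matrix m n ℝ) : 0 ≤ frob M :=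
  Real.sqrt_nonneg _

theorem frob_zero {m n : Type*} [Fintype m] [Fintype n] : frob (0 : Matrix m n ℝ) = 0 := by
  simp [frob]

theorem frob_neg {m n : Type*} [Fintype m] [Fintype n] (M : Matrix m n ℝ) :
    frob (-M) = frob M := by
  simp [frob]

section Averaging

variable {ι : Type*} [DecidableEq ι] {f : ι → ℝ}

theorem card_mul_sum_le_card_mul_sum {D A : Finset ι}
    (hle : ∀ j ∈ D, ∀ k ∈ A \ D, f j ≤ f k) (hcard : D.card ≤ A.card) :
    (A.card : ℝ) * ∑ j ∈ D, f j ≤ D.card * ∑ j ∈ A, f j := by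
  rcases D.eq_empty_or_nonempty with rfl | hD
  · simp
  -- Both sums share the part over `A ∩ D`; the rest of `D` lies below `M` and the rest of `A` above.
  set M := D.sup' hD f
  have hDM : ∀ j ∈ D, f j ≤ M := fun j hj => D.le_sup' f hj
  have hMA : ∀ k ∈ A \ D, M ≤ f k := fun k hk => D.sup'_le hD f fun j hj => hle j hj k hk
  have hP : ∑ j ∈ A ∩ D, f j ≤ (A ∩ D).card * M := by
    simpa using Finset.sum_le_card_nsmul _ _ _ fun j hj => hDM j (Finset.mem_inter.mp hj).2
  have hsumD : ∑ j ∈ D, f j ≤ ∑ j ∈ A ∩ D, f j + (D.card - (A ∩ D).card) * M := by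
    have hcard : ((D \ A).card : ℝ) = D.card - (A ∩ D).card := by
      rw [← Finset.card_sdiff_add_card_inter D A, Finset.inter_comm]; push_cast; ring
    have hrest : ∑ j ∈ D \ A, f j ≤ (D \ A).card * M := by
      simpa using Finset.sum_le_card_nsmul _ _ _ fun j hj => hDM j (Finset.mem_sdiff.mp hj).1
    rw [← Finset.sum_inter_add_sum_sdiff D A, Finset.inter_comm, ← hcard]
    linarith
  have hsumA : ∑ j ∈ A ∩ D, f j + (A.card - (A ∩ D).card) * M ≤ ∑ j ∈ A, f j := by
    have hcard : ((A \ D).card : ℝ) = A.card - (A ∩ D).card := by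
      rw [← Finset.card_sdiff_add_card_inter A D]; push_cast; ring
    have hrest : (A \ D).card * M ≤ ∑ j ∈ A \ D, f j := by
      simpa using Finset.card_nsmul_le_sum _ _ _ hMA
    rw [← Finset.sum_inter_add_sum_sdiff A D, ← hcard]
    linarith
  have hcard' : (D.card : ℝ) ≤ A.card := by exact_mod_cast hcard
  calc (A.card : ℝ) * ∑ j ∈ D, f j
      ≤ A.card * (∑ j ∈ A ∩ D, f j + (D.card - (A ∩ D).card) * M) := by gcongr
    _ ≤ D.card * (∑ j ∈ A ∩ D, f j + (A.card - (A ∩ D).card) * M) := by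
      nlinarith [mul_le_mul_of_nonneg_left hP (sub_nonneg.mpr hcard')]
    _ ≤ D.card * ∑ j ∈ A, f j := by gcongr

theorem card_mul_sum_compl_le_of_forall_le [Fintype ι] (hf : ∀ i, 0 ≤ f i)
    {S T A : Finset ι} (hS : ∀ j ∈ S, ∀ k ∉ S, f k ≤ f j) (hT : ∀ j ∉ T, f j = 0)
    (hAT : A ⊆ T) (hST : S.card ≤ T.card) (hA : T.card ≤ A.card + S.card) :
    (A.card : ℝ) * ∑ j ∈ Sᶜ, f j ≤ ((T.card : ℝ) - S.card) * ∑ j ∈ A, f j := by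
  by_cases hsub : S ⊆ T
  · have hsum : ∑ j ∈ Sᶜ, f j = ∑ j ∈ T \ S, f j := by
      refine (Finset.sum_subset (fun j hj => ?_) fun j _ hj => hT j ?_).symm
      · simpa using (Finset.mem_sdiff.mp hj).2
      · simp_all
    have hcard : ((T \ S).card : ℝ) = T.card - S.card := by
      rw [Finset.card_sdiff_of_subset hsub, Nat.cast_sub hST]
    rw [hsum, ← hcard]
    refine card_mul_sum_le_card_mul_sum (fun j hj k hk => ?_) ?_
    · obtain ⟨hkA, hkTS⟩ := Finset.mem_sdiff.mp hk
      have hkS : k ∈ S := by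
        by_contra hkS
        exact hkTS (Finset.mem_sdiff.mpr ⟨hAT hkA, hkS⟩)
      exact hS k hkS j (Finset.mem_sdiff.mp hj).2
    · rw [Finset.card_sdiff_of_subset hsub]; omega
  · -- A kept element lies outside the support, so every dropped value is `0`.
    obtain ⟨k, hkS, hkT⟩ := Finset.not_subset.mp hsub
    have hzero : ∑ j ∈ Sᶜ, f j = 0 :=
      Finset.sum_eq_zero fun j hj =>
        le_antisymm (hT k hkT ▸ hS k hkS j (Finset.mem_compl.mp hj)) (hf j)
    rw [hzero, mul_zero]
    have : (S.card : ℝ) ≤ T.card := by exact_mod_cast hST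
    exact mul_nonneg (by linarith) (Finset.sum_nonneg fun j _ => hf j)

end Averaging

/-- Contractive projection property of group hard-thresholding: if `Y = HT(X, s)` keeps
`s` frontal slices of largest Frobenius norm (indexed by a set `S`, ties broken
arbitrarily), `X` has `s₁` nonzero slices, `X*` has `s₂ < s ≤ s₁` nonzero slices, and
the support of `X*` is contained in that of `X`, then
`‖HT(X,s) − X‖_F² ≤ ((s₁ − s)/(s₁ − s₂)) ‖X − X*‖_F²`. -/
theorem hard_threshold_contractive {N T₀ : ℕ}
    (X Xstar Y : Fin T₀ → Matrix (Fin N) (Fin N) ℝ) (s : ℕ) (S : Finset (Fin T₀))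
    (hScard : S.card = s)
    (hSmax : ∀ j ∈ S, ∀ k ∉ S, frob (X k) ≤ frob (X j))
    (hY : ∀ j, Y j = if j ∈ S then X j else 0)
    (hs2 : (Finset.univ.filter (fun j => Xstar j ≠ 0)).card < s)
    (hs1 : s ≤ (Finset.univ.filter (fun j => X j ≠ 0)).card)
    (hsub : Finset.univ.filter (fun j => Xstar j ≠ 0) ⊆
      Finset.univ.filter (fun j => X j ≠ 0)) :
    ∑ j, (frob (Y j - X j)) ^ 2 ≤
      (((Finset.univ.filter (fun j => X j ≠ 0)).card : ℝ) - s) /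
        (((Finset.univ.filter (fun j => X j ≠ 0)).card : ℝ) -
          ((Finset.univ.filter (fun j => Xstar j ≠ 0)).card : ℝ)) *
      ∑ j, (frob (X j - Xstar j)) ^ 2 := by
  set S₁ := Finset.univ.filter (fun j => X j ≠ 0)
  set S₂ := Finset.univ.filter (fun j => Xstar j ≠ 0)
  have hdropped : ∑ j, frob (Y j - X j) ^ 2 = ∑ j ∈ Sᶜ, frob (X j) ^ 2 := by
    rw [← Finset.sum_add_sum_compl S, Finset.sum_eq_zero fun j hj => by simp [hY, hj, frob_zero],
      zero_add]
    exact Finset.sum_congr rfl fun j hj => by simp [hY, Finset.mem_compl.mp hj, frob_neg]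
  have hoff : ∑ j ∈ S₁ \ S₂, frob (X j) ^ 2 ≤ ∑ j, frob (X j - Xstar j) ^ 2 := by
    calc ∑ j ∈ S₁ \ S₂, frob (X j) ^ 2 = ∑ j ∈ S₁ \ S₂, frob (X j - Xstar j) ^ 2 :=
          Finset.sum_congr rfl fun j hj => by simp_all [S₂]
      _ ≤ ∑ j, frob (X j - Xstar j) ^ 2 :=
          Finset.sum_le_sum_of_subset_of_nonneg (Finset.subset_univ _) fun j _ _ => sq_nonneg _
  have hkey := card_mul_sum_compl_le_of_forall_le (f := fun j => frob (X j) ^ 2)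
    (fun j => sq_nonneg _) (fun j hj k hk => pow_le_pow_left₀ (frob_nonneg _) (hSmax j hj k hk) 2)
    (fun j hj => by simp_all [S₁, frob_zero]) Finset.sdiff_subset (hScard ▸ hs1)
    (by rw [Finset.card_sdiff_of_subset hsub]; omega)
  rw [Finset.card_sdiff_of_subset hsub, hScard,
    Nat.cast_sub (Finset.card_le_card hsub)] at hkey
  have hgap : (0 : ℝ) < S₁.card - S₂.card := by
    have : S₂.card < S₁.card := hs2.trans_le hs1
    rw [sub_pos]; exact_mod_cast this
  have hs : (s : ℝ) ≤ S₁.card := by exact_mod_cast hs1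
  rw [hdropped, div_mul_eq_mul_div, le_div_iff₀ hgap]
  linarith [mul_le_mul_of_nonneg_left hoff (sub_nonneg.mpr hs)]
end

section
/- Let U, U* ∈ ℝ^{N×r} with U*ᵀU* = b²I_r, R ∈ ℝ^{r×r} orthogonal, and suppose ‖U − U*R‖_F² ≤ C₁ for some C₁ ≥ 0. Then ⟨U(UᵀU − b²I_r), U − U*R⟩ ≥ (1/4)‖UᵀU − b²I_r‖_F² − (1/4)‖U − U*R‖_F⁴ ≥ (1/4)‖UᵀU − b²I_r‖_F² − (C₁/4)‖U − U*R‖_F². -/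
/-!
Write `S = U*R`, `Δ = U − S` and `W = UᵀU − b²I`. Since `SᵀS = b²I`, the matrices `2UᵀΔ` and
`ΔᵀΔ + W` differ by the antisymmetric `SᵀU − UᵀS`, which is orthogonal to the symmetric `W`;
hence `2⟨UW, Δ⟩ = ⟨W, ΔᵀΔ⟩ + ‖W‖_F²`. Cauchy–Schwarz, `‖ΔᵀΔ‖_F ≤ ‖Δ‖_F²` and
`xy ≤ ½x² + ½y²` then give the first bound, and `‖Δ‖_F² ≤ C₁` the second.
-/

open Matrix

/-- Trace inner product `⟨A,B⟩ = tr(AᵀB)` on real matrices. -/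
noncomputable def minner {m n : Type*} [Fintype m] [Fintype n] (A B : Matrix m n ℝ) : ℝ :=
  Matrix.trace (Aᵀ * B)

section Frobenius

variable {l m n : Type*} [Fintype l] [Fintype m] [Fintype n]

attribute [local instance] Matrix.frobeniusNormedAddCommGroup

lemma frob_sq (M : Matrix m n ℝ) : frob M ^ 2 = ∑ i, ∑ j, M i j ^ 2 :=
  Real.sq_sqrt (by positivity)

lemma frob_eq_norm (M : Matrix m n ℝ) : frob M = ‖M‖ := by
  rw [frob, Matrix.frobenius_norm_def, Real.sqrt_eq_rpow]
  simp only [Real.norm_eq_abs, Real.rpow_two, sq_abs]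

lemma frob_transpose_mul_self_le (A : Matrix m n ℝ) : frob (Aᵀ * A) ≤ frob A ^ 2 := by
  simp only [frob_eq_norm]
  calc _ ≤ ‖Aᵀ‖ * ‖A‖ := Matrix.frobenius_norm_mul Aᵀ A
    _ = ‖A‖ ^ 2 := by rw [Matrix.frobenius_norm_transpose, sq]

lemma minner_eq_sum (A B : Matrix m n ℝ) : minner A B = ∑ i, ∑ j, A i j * B i j := by
  rw [minner, Matrix.trace, Finset.sum_comm]
  simp only [Matrix.diag, Matrix.mul_apply, Matrix.transpose_apply]

lemma minner_self (M : Matrix m n ℝ) : minner M M = frob M ^ 2 := by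
  rw [minner_eq_sum, frob_sq]
  simp only [sq]

lemma neg_frob_mul_frob_le_minner (A B : Matrix m n ℝ) : -(frob A * frob B) ≤ minner A B := by
  have cauchy_schwarz := Real.sum_mul_le_sqrt_mul_sqrt Finset.univ
    (fun p : m × n ↦ -A p.1 p.2) (fun p ↦ B p.1 p.2)
  simp only [Fintype.sum_prod_type, neg_mul, Finset.sum_neg_distrib, neg_sq] at cauchy_schwarz
  rw [minner_eq_sum, frob, frob]
  linarith

lemma minner_mul_left (A : Matrix l m ℝ) (B : Matrix m n ℝ) (C : Matrix l n ℝ) :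
    minner (A * B) C = minner B (Aᵀ * C) := by
  simp only [minner, Matrix.transpose_mul, Matrix.mul_assoc]

lemma minner_transpose_right_of_symm {W : Matrix n n ℝ} (hW : Wᵀ = W) (M : Matrix n n ℝ) :
    minner W Mᵀ = minner W M := by
  rw [minner, minner, ← Matrix.transpose_mul, Matrix.trace_transpose, Matrix.trace_mul_comm, hW]

end Frobenius

section CrossTerm

variable {m n : Type*} [Fintype m] [Fintype n] [DecidableEq n]

lemma two_mul_minner_transpose_mul_sub {U S : Matrix m n ℝ} {W : Matrix n n ℝ} {c : ℝ}
    (hW : Wᵀ = W) (hS : Sᵀ * S = c • 1) :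
    2 * minner W (Uᵀ * (U - S)) =
      minner W ((U - S)ᵀ * (U - S)) + minner W (Uᵀ * U - c • 1) := by
  have gram : (U - S)ᵀ * (U - S) = Uᵀ * U - Uᵀ * S - (Uᵀ * S)ᵀ + c • 1 := by
    simp only [Matrix.transpose_sub, Matrix.transpose_mul, Matrix.transpose_transpose,
      Matrix.sub_mul, Matrix.mul_sub, hS]
    abel
  have hsymm := minner_transpose_right_of_symm hW (Uᵀ * S)
  rw [gram]
  simp only [minner, Matrix.mul_sub, Matrix.mul_add, Matrix.trace_sub, Matrix.trace_add] at hsymm ⊢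
  linarith

lemma minner_mul_gram_sub_smul_one_ge {U S : Matrix m n ℝ} {c : ℝ} (hS : Sᵀ * S = c • 1) :
    minner (U * (Uᵀ * U - c • 1)) (U - S) ≥
      1 / 4 * frob (Uᵀ * U - c • 1) ^ 2 - 1 / 4 * frob (U - S) ^ 4 := by
  set W := Uᵀ * U - c • (1 : Matrix n n ℝ)
  set Δ := U - S
  have hW : Wᵀ = W := by
    simp only [W, Matrix.transpose_sub, Matrix.transpose_mul, Matrix.transpose_transpose,
      Matrix.transpose_smul, Matrix.transpose_one]
  have identity := two_mul_minner_transpose_mul_sub (U := U) hW hS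
  have cauchy_schwarz : -(frob W * frob Δ ^ 2) ≤ minner W (Δᵀ * Δ) :=
    le_trans (neg_le_neg (mul_le_mul_of_nonneg_left (frob_transpose_mul_self_le Δ)
      (Real.sqrt_nonneg _))) (neg_frob_mul_frob_le_minner W (Δᵀ * Δ))
  rw [minner_mul_left, ge_iff_le]
  rw [minner_self] at identity
  nlinarith [sq_nonneg (frob W - frob Δ ^ 2)]

end CrossTerm

theorem regularizer_cross_lower_bound_general {N r : ℕ}
    (U Ustar : Matrix (Fin N) (Fin r) ℝ) (R : Matrix (Fin r) (Fin r) ℝ)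
    (b C₁ : ℝ)
    (hUstar : Ustarᵀ * Ustar = (b ^ 2) • (1 : Matrix (Fin r) (Fin r) ℝ))
    (hR : Rᵀ * R = 1)
    (hclose : (frob (U - Ustar * R)) ^ 2 ≤ C₁) :
    minner (U * (Uᵀ * U - (b ^ 2) • (1 : Matrix (Fin r) (Fin r) ℝ))) (U - Ustar * R) ≥
      1 / 4 * (frob (Uᵀ * U - (b ^ 2) • (1 : Matrix (Fin r) (Fin r) ℝ))) ^ 2 -
        1 / 4 * (frob (U - Ustar * R)) ^ 4 ∧
    1 / 4 * (frob (Uᵀ * U - (b ^ 2) • (1 : Matrix (Fin r) (Fin r) ℝ))) ^ 2 -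
        1 / 4 * (frob (U - Ustar * R)) ^ 4 ≥
      1 / 4 * (frob (Uᵀ * U - (b ^ 2) • (1 : Matrix (Fin r) (Fin r) ℝ))) ^ 2 -
        C₁ / 4 * (frob (U - Ustar * R)) ^ 2 := by
  have hgram : (Ustar * R)ᵀ * (Ustar * R) = (b ^ 2) • (1 : Matrix (Fin r) (Fin r) ℝ) := by
    rw [Matrix.transpose_mul, Matrix.mul_assoc, ← Matrix.mul_assoc Ustarᵀ, hUstar,
      Matrix.smul_mul, Matrix.one_mul, Matrix.mul_smul, hR]
  refine ⟨minner_mul_gram_sub_smul_one_ge hgram, ?_⟩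
  have hquartic : frob (U - Ustar * R) ^ 4 ≤ C₁ * frob (U - Ustar * R) ^ 2 := by
    rw [show (4 : ℕ) = 2 * 2 by rfl, pow_mul, sq (frob _ ^ 2)]
    exact mul_le_mul_of_nonneg_right hclose (sq_nonneg _)
  linarith

/-- For `U*ᵀU* = b²I`, `R` orthogonal, and `‖U − U*R‖_F² ≤ C₁`:
`⟨U(UᵀU − b²I), U − U*R⟩ ≥ ¼‖UᵀU − b²I‖_F² − ¼‖U − U*R‖_F⁴
  ≥ ¼‖UᵀU − b²I‖_F² − (C₁/4)‖U − U*R‖_F²`. -/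
theorem regularizer_cross_lower_bound {N r : ℕ}
    (U Ustar : Matrix (Fin N) (Fin r) ℝ) (R : Matrix (Fin r) (Fin r) ℝ)
    (b C₁ : ℝ) (hb : 0 < b) (hC₁ : 0 ≤ C₁)
    (hUstar : Ustarᵀ * Ustar = (b ^ 2) • (1 : Matrix (Fin r) (Fin r) ℝ))
    (hR : Rᵀ * R = 1)
    (hclose : (frob (U - Ustar * R)) ^ 2 ≤ C₁) :
    minner (U * (Uᵀ * U - (b ^ 2) • (1 : Matrix (Fin r) (Fin r) ℝ))) (U - Ustar * R) ≥
      1 / 4 * (frob (Uᵀ * U - (b ^ 2) • (1 : Matrix (Fin r) (Fin r) ℝ))) ^ 2 -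
        1 / 4 * (frob (U - Ustar * R)) ^ 4 ∧
    1 / 4 * (frob (Uᵀ * U - (b ^ 2) • (1 : Matrix (Fin r) (Fin r) ℝ))) ^ 2 -
        1 / 4 * (frob (U - Ustar * R)) ^ 4 ≥
      1 / 4 * (frob (Uᵀ * U - (b ^ 2) • (1 : Matrix (Fin r) (Fin r) ℝ))) ^ 2 -
        C₁ / 4 * (frob (U - Ustar * R)) ^ 2 :=
  regularizer_cross_lower_bound_general U Ustar R b C₁ hUstar hR hclose
end
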